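/- arXiv:2106.03275 — 2 statements merged into one kernel-verified Lean document; each statement's English description precedes it below -/
import Mathlib

section
/- Let A ⊆ ℝ^m be nonempty, closed, and convex, and k ≠ 0 with A - ℝ₊·k ⊆ A. Then the scalarizing functional φ_{A,k}(y) = inf { t ∈ ℝ : y ∈ t·k + A } is a convex function on ℝ^m (with values in the extended reals). -/
/-- The Gerstewitz/Tammer nonlinear scalarizing functional
`φ_{A,k}(y) = inf { t ∈ ℝ : y ∈ t·k + A }`, with values in the extended reals. -/
noncomputable def gerstewitz {m : ℕ} (A : Set (Fin m → ℝ)) (k : Fin m → ℝ)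
    (y : Fin m → ℝ) : EReal :=
  sInf ((fun t : ℝ => (t : EReal)) '' {t : ℝ | y - t • k ∈ A})

lemma gerstewitz_mem {m : ℕ} (A : Set (Fin m → ℝ)) (hA_closed : IsClosed A)
    (k : Fin m → ℝ) (y : Fin m → ℝ) (t : ℝ) (h : gerstewitz A k y = (t : EReal)) :
    y - t • k ∈ A := by
  set S : Set ℝ := {t : ℝ | y - t • k ∈ A} with hS
  have hScl : IsClosed S := by
    have : S = (fun s : ℝ => y - s • k) ⁻¹' A := rfl
    rw [this]
    exact hA_closed.preimage (by continuity)
  have hSne : S.Nonempty := by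
    by_contra hne
    rw [Set.not_nonempty_iff_eq_empty] at hne
    unfold gerstewitz at h
    rw [← hS, hne] at h
    simp at h
  have hlb : ∀ s ∈ S, t ≤ s := by
    intro s hs
    have : (t : EReal) ≤ (s : EReal) := h ▸ sInf_le ⟨s, hs, rfl⟩
    exact_mod_cast this
  have hbdd : BddBelow S := ⟨t, hlb⟩
  have hrmem : sInf S ∈ S := hScl.csInf_mem hSne hbdd
  have h1 : t ≤ sInf S := hlb _ hrmem
  have h2 : ((sInf S : ℝ) : EReal) ≤ (t : EReal) := by
    rw [← h]
    apply le_sInf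
    rintro x ⟨s, hs, rfl⟩
    show ((sInf S : ℝ) : EReal) ≤ (s : EReal)
    exact_mod_cast csInf_le hbdd hs
  have h2' : sInf S ≤ t := by exact_mod_cast h2
  have : t = sInf S := le_antisymm h1 h2'
  rw [this]; exact hrmem

/-- If `A ⊆ ℝ^m` is nonempty, closed and convex, and `k ≠ 0` with `A - ℝ₊·k ⊆ A`,
then `φ_{A,k}` is convex: at points where its values are finite (real), the convexity
inequality `φ(λy₁ + (1-λ)y₂) ≤ λ φ(y₁) + (1-λ) φ(y₂)` holds for all `λ ∈ [0,1]`. -/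
theorem gerstewitz_convex {m : ℕ} (A : Set (Fin m → ℝ)) (hA : A.Nonempty)
    (hA_closed : IsClosed A) (hA_convex : Convex ℝ A)
    (k : Fin m → ℝ) (hk : k ≠ 0)
    (hrec : ∀ a ∈ A, ∀ t : ℝ, 0 ≤ t → a - t • k ∈ A)
    (y₁ y₂ : Fin m → ℝ) (l : ℝ) (hl0 : 0 ≤ l) (hl1 : l ≤ 1)
    (t₁ t₂ : ℝ) (h₁ : gerstewitz A k y₁ = (t₁ : EReal))
    (h₂ : gerstewitz A k y₂ = (t₂ : EReal)) :
    gerstewitz A k (l • y₁ + (1 - l) • y₂) ≤ ((l * t₁ + (1 - l) * t₂ : ℝ) : EReal) := by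
  have m₁ := gerstewitz_mem A hA_closed k y₁ t₁ h₁
  have m₂ := gerstewitz_mem A hA_closed k y₂ t₂ h₂
  have hconv := hA_convex (b := 1 - l) m₁ m₂ hl0 (by linarith) (by ring)
  have hmem : (l • y₁ + (1 - l) • y₂) - (l * t₁ + (1 - l) * t₂) • k ∈ A := by
    have : (l • y₁ + (1 - l) • y₂) - (l * t₁ + (1 - l) * t₂) • k
        = l • (y₁ - t₁ • k) + (1 - l) • (y₂ - t₂ • k) := by
      module
    rw [this]; exact hconv
  exact sInf_le ⟨l * t₁ + (1 - l) * t₂, hmem, rfl⟩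
end

section
/- Let A_L = { y ∈ ℝ^m : ⟨aⁱ, y⟩ ≤ αᵢ, i ∈ I } be a nonempty polyhedron defined by finitely many linear inequalities (I finite), let w ∈ ℝ^m, and let k ∈ ℝ^m satisfy ⟨aⁱ, k⟩ > 0 for all i ∈ I. Then φ_{w+A_L,k}(y) := inf { t ∈ ℝ : y ∈ t·k + w + A_L } = max_{i ∈ I} (⟨aⁱ, y⟩ - ⟨aⁱ, w⟩ - αᵢ) / ⟨aⁱ, k⟩ for every y ∈ ℝ^m. -/
/-- For a nonempty polyhedron `A_L = { y : ⟨aⁱ, y⟩ ≤ αᵢ, i ∈ I }` (`I` finite nonempty),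
`w ∈ ℝ^m` and `k` with `⟨aⁱ, k⟩ > 0` for all `i`, the scalarizing functional
`φ_{w+A_L,k}(y) = inf { t : y ∈ t·k + w + A_L }` equals
`max_{i ∈ I} (⟨aⁱ, y⟩ - ⟨aⁱ, w⟩ - αᵢ) / ⟨aⁱ, k⟩`. -/
theorem gerstewitz_polyhedral_formula {m : ℕ} {I : Type*} [Fintype I] [Nonempty I]
    (a : I → Fin m → ℝ) (c : I → ℝ) (w k : Fin m → ℝ)
    (hk : ∀ i, 0 < ∑ j, a i j * k j)
    (hne : {z : Fin m → ℝ | ∀ i, ∑ j, a i j * z j ≤ c i}.Nonempty)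
    (y : Fin m → ℝ) :
    sInf {t : ℝ | ∃ z : Fin m → ℝ, (∀ i, ∑ j, a i j * z j ≤ c i) ∧ y = t • k + w + z} =
      Finset.univ.sup' Finset.univ_nonempty
        (fun i => ((∑ j, a i j * y j) - (∑ j, a i j * w j) - c i) / (∑ j, a i j * k j)) := by
  set M := Finset.univ.sup' Finset.univ_nonempty
      (fun i => ((∑ j, a i j * y j) - (∑ j, a i j * w j) - c i) / (∑ j, a i j * k j)) with hM
  have key : ∀ t : ℝ, ∀ i : I,
      (∑ j, a i j * (y j - t * k j - w j))
        = (∑ j, a i j * y j) - t * (∑ j, a i j * k j) - (∑ j, a i j * w j) := by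
    intro t i
    rw [Finset.mul_sum]
    rw [← Finset.sum_sub_distrib, ← Finset.sum_sub_distrib]
    congr 1; ext j; ring
  have hset : {t : ℝ | ∃ z : Fin m → ℝ, (∀ i, ∑ j, a i j * z j ≤ c i) ∧ y = t • k + w + z}
      = Set.Ici M := by
    ext t
    simp only [Set.mem_setOf_eq, Set.mem_Ici]
    constructor
    · rintro ⟨z, hz, hy⟩
      have hzj : ∀ j, z j = y j - t * k j - w j := by
        intro j
        have := congrFun hy j
        simp only [Pi.add_apply, Pi.smul_apply, smul_eq_mul] at this
        linarith
      rw [hM, Finset.sup'_le_iff]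
      intro i _
      rw [div_le_iff₀ (hk i)]
      have h1 := hz i
      have h2 : (∑ j, a i j * z j)
          = (∑ j, a i j * y j) - t * (∑ j, a i j * k j) - (∑ j, a i j * w j) := by
        rw [show z = fun j => y j - t * k j - w j from funext hzj]
        exact key t i
      rw [h2] at h1
      linarith
    · intro ht
      refine ⟨fun j => y j - t * k j - w j, ?_, ?_⟩
      · intro i
        rw [hM] at ht
        have hi : ((∑ j, a i j * y j) - (∑ j, a i j * w j) - c i) / (∑ j, a i j * k j) ≤ t :=
          le_trans (Finset.le_sup'
            (fun i => ((∑ j, a i j * y j) - (∑ j, a i j * w j) - c i) / (∑ j, a i j * k j))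
            (Finset.mem_univ i)) ht
        rw [div_le_iff₀ (hk i)] at hi
        rw [key t i]
        linarith
      · funext j
        simp only [Pi.add_apply, Pi.smul_apply, smul_eq_mul]
        ring
  rw [hset, csInf_Ici]
end
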